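/- Let Σ₀ = {⋆}, Σ₂ = {ok, error}, A the one-state automaton with Δ(a₀) = {⋆, (ok, a₀, a₀)}, and the distance lifting induced by f(x,y) = ½x + ½y. Let E' be the set of nodes of T labelled error all of whose proper ancestors are labelled ok. Then (a₀, root, ε) is winning for Verifier in the ε-acceptance game if and only if ε ≥ Σ_{v ∈ E'} 2^{-|v|}. -/

import Mathlib

open unitInterval

instance : Fact ((0:ℝ) ≤ 1) := ⟨zero_le_one⟩

/-- Finite binary strings. -/
abbrev Word := List Bool

/-- A set of words is prefix-closed. -/
def PrefixClosed (U : Set Word) : Prop :=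
  ∀ ⦃w : Word⦄, w ∈ U → ∀ ⦃v : Word⦄, v <+: w → v ∈ U

/-- A set of words is sibling-closed. -/
def SiblingClosed (U : Set Word) : Prop :=
  ∀ w : Word, w ++ [false] ∈ U ↔ w ++ [true] ∈ U

/-- The distance lifting of `d` along the binary-tree functor
`F X = S0 ⊕ S2 × X × X`, induced by `f`. -/
def dlift {S0 S2 X Y : Type*} [DecidableEq S0] [DecidableEq S2]
    (f : I → I → I) (d : X → Y → I) :
    (S0 ⊕ S2 × X × X) → (S0 ⊕ S2 × Y × Y) → I
  | Sum.inl s, Sum.inl t => if s = t then 0 else 1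
  | Sum.inr (s, x1, x2), Sum.inr (t, y1, y2) =>
      if s = t then f (d x1 y1) (d x2 y2) else 1
  | _, _ => 1

/-- The relation lifting along the binary-tree functor. -/
def rlift {S0 S2 X Y : Type*} (R : X → Y → Prop) :
    (S0 ⊕ S2 × X × X) → (S0 ⊕ S2 × Y × Y) → Prop
  | Sum.inl s, Sum.inl t => s = t
  | Sum.inr (s, x1, x2), Sum.inr (t, y1, y2) => s = t ∧ R x1 y1 ∧ R x2 y2
  | _, _ => False

/-- A labelled binary tree: a prefix- and sibling-closed domain of words
containing the root, together with its successor function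
`γ : U → S0 ⊕ S2 × U × U` sending a branching node to its label and
its two children. -/
structure LTree (S0 S2 : Type*) where
  U : Set Word
  prefixClosed : PrefixClosed U
  siblingClosed : SiblingClosed U
  rootMem : ([] : Word) ∈ U
  γ : U → S0 ⊕ S2 × U × U
  γ_children : ∀ (w : U) (s : S2) (l r : U),
      γ w = Sum.inr (s, l, r) →
      (l : Word) = (w : Word) ++ [false] ∧ (r : Word) = (w : Word) ++ [true]

/-- The root of a labelled binary tree, as an element of its domain. -/
def LTree.root {S0 S2 : Type*} (T : LTree S0 S2) : T.U := ⟨[], T.rootMem⟩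

/-- A nondeterministic tree automaton (with acceptance condition `Acc = A^ω`,
i.e. every infinite run accepted). -/
structure NTA (S0 S2 : Type*) where
  A : Type*
  a0 : A
  Δ : A → Set (S0 ⊕ S2 × A × A)

/-- Deadlock freeness: every state has at least one transition. -/
def NTA.DeadlockFree {S0 S2 : Type*} (𝔸 : NTA S0 S2) : Prop :=
  ∀ a : 𝔸.A, (𝔸.Δ a).Nonempty

/-- Winning positions for Verifier in the (Boolean) acceptance game:
at `(a,w)` Verifier picks `δa ∈ Δ a` and a relation `R` with
`(δa, γ w) ∈ R̄`; Falsifier picks an element of `R`; infinite plays are won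
by Verifier. -/
def AccWin {S0 S2 : Type*} (𝔸 : NTA S0 S2) (T : LTree S0 S2)
    (p : 𝔸.A × T.U) : Prop :=
  ∃ S : Set (𝔸.A × T.U), p ∈ S ∧
    ∀ q ∈ S, ∃ δa ∈ 𝔸.Δ q.1, ∃ R : 𝔸.A → T.U → Prop,
      rlift R δa (T.γ q.2) ∧ ∀ (b : 𝔸.A) (v : T.U), R b v → (b, v) ∈ S

/-- Winning positions for Verifier in the ε-acceptance game:
at `(a,w,ε)` Verifier picks `δa ∈ Δ a` and `d : A × U → [0,1]` with
`d̄(δa, γ w) ≤ ε`; Falsifier picks `(b,v,ε')` with `d b v ≤ ε'`;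
infinite plays are won by Verifier. -/
def EAccWin {S0 S2 : Type*} [DecidableEq S0] [DecidableEq S2]
    (f : I → I → I) (𝔸 : NTA S0 S2) (T : LTree S0 S2)
    (p : 𝔸.A × T.U × I) : Prop :=
  ∃ S : Set (𝔸.A × T.U × I), p ∈ S ∧
    ∀ q ∈ S, ∃ δa ∈ 𝔸.Δ q.1, ∃ d : 𝔸.A → T.U → I,
      dlift f d δa (T.γ q.2.1) ≤ q.2.2 ∧
      ∀ (b : 𝔸.A) (v : T.U) (ε' : I), d b v ≤ ε' → (b, v, ε') ∈ S

/-- The lifting function `f(x,y) = ½x + ½y` on the unit interval. -/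
noncomputable def halfAdd (x y : I) : I :=
  ⟨(x : ℝ) / 2 + (y : ℝ) / 2,
    Set.mem_Icc.mpr ⟨by nlinarith [unitInterval.nonneg x, unitInterval.nonneg y],
      by nlinarith [unitInterval.le_one x, unitInterval.le_one y]⟩⟩

/-- Binary labels `ok` and `error`. -/
inductive Lab2 : Type
  | ok : Lab2
  | error : Lab2
deriving DecidableEq

/-- The one-state automaton with `S0 = {⋆}`, `S2 = {ok, error}` and
`Δ(a₀) = {⋆, (ok, a₀, a₀)}`. -/
def A2 : NTA Unit Lab2 where
  A := Unit
  a0 := ()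
  Δ := fun _ => {Sum.inl (), Sum.inr (Lab2.ok, (), ())}

/-- The set of minimal error nodes of `T`: nodes labelled `error` all of whose
strict prefixes are labelled `ok`. -/
def minimalError (T : LTree Unit Lab2) : Set T.U :=
  {v | (∃ l r : T.U, T.γ v = Sum.inr (Lab2.error, l, r)) ∧
       ∀ u : T.U, (u : Word) <+: (v : Word) → (u : Word) ≠ (v : Word) →
         ∃ l r : T.U, T.γ u = Sum.inr (Lab2.ok, l, r)}

/-!
Let `m(w)` be the measure of the minimal error nodes below `w`, rescaled by `2^{|w|}`. It is `0`
at leaves, `1` at error nodes and the average of the children's values at `ok` nodes; this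
recursion is exactly the best bound Verifier can meet with one transition of `A2`. Hence
`m(w) ≤ ε` is an invariant Verifier can maintain. Conversely, along any winning strategy the
depth-`n` truncations of `m` stay below the current `ε` (induction on `n`), and `m` is their
supremum because a finite partial sum only sees nodes of bounded depth.
-/

/-- Verifier's best one-step value at a node with successor `t` when the children are given
values `x`: the least `dlift halfAdd d δ t` over the transitions `δ` of `A2`
(`massStep_le_dlift`, `exists_dlift_eq_massStep`). -/
noncomputable def massStep {X : Type*} (x : X → ℝ) : Unit ⊕ Lab2 × X × X → ℝ
  | Sum.inl _ => 0
  | Sum.inr (Lab2.error, _, _) => 1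
  | Sum.inr (Lab2.ok, l, r) => x l / 2 + x r / 2

section massStep

variable {X : Type*}

theorem massStep_le_one {x : X → ℝ} (hx : ∀ v, x v ≤ 1) (t : Unit ⊕ Lab2 × X × X) :
    massStep x t ≤ 1 := by
  rcases t with _ | ⟨_ | _, l, r⟩ <;> simp only [massStep]
  · exact zero_le_one
  · linarith [hx l, hx r]
  · exact le_rfl

theorem massStep_le_dlift {x : X → ℝ} {d : Unit → X → I} (hxd : ∀ v, x v ≤ d () v)
    {δ : Unit ⊕ Lab2 × Unit × Unit} (hδ : δ ∈ A2.Δ ()) (t : Unit ⊕ Lab2 × X × X) :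
    massStep x t ≤ dlift halfAdd d δ t := by
  have hx : ∀ v, x v ≤ 1 := fun v => (hxd v).trans (d () v).2.2
  have hdlift_one : ∀ {δ t}, dlift halfAdd d δ t = 1 → massStep x t ≤ dlift halfAdd d δ t :=
    fun h => h ▸ massStep_le_one hx _
  rcases hδ with rfl | rfl <;> rcases t with _ | ⟨_ | _, l, r⟩
  · simp [massStep, dlift]
  · exact hdlift_one rfl
  · exact hdlift_one rfl
  · exact hdlift_one rfl
  · simp only [massStep, dlift, if_true]
    change _ ≤ ((d () l : ℝ) / 2 + (d () r : ℝ) / 2)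
    linarith [hxd l, hxd r]
  · exact hdlift_one (by simp [dlift])

theorem exists_dlift_eq_massStep (d : X → I) (t : Unit ⊕ Lab2 × X × X) :
    ∃ δ ∈ A2.Δ (), (dlift halfAdd (fun _ => d) δ t : ℝ) = massStep (fun v => (d v : ℝ)) t := by
  rcases t with _ | ⟨_ | _, l, r⟩
  · exact ⟨Sum.inl (), Or.inl rfl, by simp [dlift, massStep]⟩
  · exact ⟨Sum.inr (Lab2.ok, (), ()), Or.inr rfl, by simp [dlift, massStep]; rfl⟩
  · exact ⟨Sum.inl (), Or.inl rfl, by simp [dlift, massStep]⟩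

end massStep

namespace LTree

variable {T : LTree Unit Lab2}

def minimalErrorBelow (T : LTree Unit Lab2) (w : T.U) : Set T.U :=
  {v | (w : Word) <+: (v : Word) ∧
     (∃ l r : T.U, T.γ v = Sum.inr (Lab2.error, l, r)) ∧
     ∀ u : T.U, (w : Word) <+: (u : Word) → (u : Word) <+: (v : Word) →
       (u : Word) ≠ (v : Word) → ∃ l r : T.U, T.γ u = Sum.inr (Lab2.ok, l, r)}

theorem minimalErrorBelow_root : T.minimalErrorBelow T.root = minimalError T := by
  ext v
  exact ⟨fun ⟨_, herr, hok⟩ => ⟨herr, fun u hu hne => hok u List.nil_prefix hu hne⟩,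
    fun ⟨herr, hok⟩ => ⟨List.nil_prefix, herr, fun u _ hu hne => hok u hu hne⟩⟩

theorem eq_or_ok_of_mem_minimalErrorBelow {w v : T.U} (hv : v ∈ T.minimalErrorBelow w) :
    v = w ∨ ∃ l r : T.U, T.γ w = Sum.inr (Lab2.ok, l, r) := by
  by_cases h : (w : Word) = (v : Word)
  · exact Or.inl (Subtype.ext h).symm
  · exact Or.inr (hv.2.2 w List.prefix_rfl hv.1 h)

theorem minimalErrorBelow_of_inl {w : T.U} {s : Unit} (h : T.γ w = Sum.inl s) :
    T.minimalErrorBelow w = ∅ := by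
  refine Set.eq_empty_of_forall_notMem fun v hv => ?_
  rcases eq_or_ok_of_mem_minimalErrorBelow hv with rfl | ⟨_, _, hok⟩
  · obtain ⟨_, _, herr⟩ := hv.2.1
    simp [h] at herr
  · simp [h] at hok

theorem minimalErrorBelow_of_error {w l r : T.U} (h : T.γ w = Sum.inr (Lab2.error, l, r)) :
    T.minimalErrorBelow w = {w} := by
  refine Set.eq_singleton_iff_unique_mem.mpr ⟨?_, fun v hv => ?_⟩
  · exact ⟨List.prefix_rfl, ⟨l, r, h⟩,
      fun u hwu huw hne => absurd (huw.eq_of_length_le hwu.length_le) hne⟩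
  · rcases eq_or_ok_of_mem_minimalErrorBelow hv with rfl | ⟨_, _, hok⟩
    · rfl
    · simp [h] at hok

theorem mem_minimalErrorBelow_child_iff {w c v : T.U} {l r : T.U} {b : Bool}
    (h : T.γ w = Sum.inr (Lab2.ok, l, r)) (hc : (c : Word) = (w : Word) ++ [b]) :
    v ∈ T.minimalErrorBelow c ↔ v ∈ T.minimalErrorBelow w ∧ (c : Word) <+: (v : Word) := by
  have hwc : (w : Word) <+: (c : Word) := hc ▸ List.prefix_append _ _
  constructor
  · intro hv
    refine ⟨⟨hwc.trans hv.1, hv.2.1, fun u hwu huv hne => ?_⟩, hv.1⟩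
    rcases List.prefix_or_prefix_of_prefix huv hv.1 with huc | hcu
    · rcases List.prefix_concat_iff.mp (hc ▸ huc) with hu | huw
      · exact hv.2.2 u (by rw [hc, hu]) huv hne
      · rw [Subtype.ext (huw.eq_of_length_le hwu.length_le)]
        exact ⟨l, r, h⟩
    · exact hv.2.2 u hcu huv hne
  · rintro ⟨hv, hcv⟩
    exact ⟨hcv, hv.2.1, fun u hcu huv hne => hv.2.2 u (hwc.trans hcu) huv hne⟩

theorem exists_child_prefix_of_mem_minimalErrorBelow {w v l r : T.U}
    (h : T.γ w = Sum.inr (Lab2.ok, l, r)) (hv : v ∈ T.minimalErrorBelow w) :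
    ∃ b : Bool, (w : Word) ++ [b] <+: (v : Word) := by
  obtain ⟨_ | ⟨b, t⟩, ht⟩ := hv.1
  · obtain ⟨_, _, herr⟩ := hv.2.1
    rw [← Subtype.ext ((List.append_nil _).symm.trans ht), h] at herr
    simp at herr
  · exact ⟨b, t, by simpa using ht⟩

theorem minimalErrorBelow_of_ok {w l r : T.U} (h : T.γ w = Sum.inr (Lab2.ok, l, r)) :
    T.minimalErrorBelow w = T.minimalErrorBelow l ∪ T.minimalErrorBelow r := by
  obtain ⟨hl, hr⟩ := T.γ_children w _ l r h
  ext v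
  rw [Set.mem_union, mem_minimalErrorBelow_child_iff h hl, mem_minimalErrorBelow_child_iff h hr]
  constructor
  · intro hv
    obtain ⟨b, hb⟩ := exists_child_prefix_of_mem_minimalErrorBelow h hv
    cases b
    · exact Or.inl ⟨hv, hl ▸ hb⟩
    · exact Or.inr ⟨hv, hr ▸ hb⟩
  · rintro (⟨hv, _⟩ | ⟨hv, _⟩) <;> exact hv

theorem disjoint_minimalErrorBelow_children {w l r : T.U}
    (h : T.γ w = Sum.inr (Lab2.ok, l, r)) :
    Disjoint (T.minimalErrorBelow l) (T.minimalErrorBelow r) := by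
  obtain ⟨hl, hr⟩ := T.γ_children w _ l r h
  refine Set.disjoint_left.mpr fun v hvl hvr => ?_
  have hlen : (l : Word).length = (r : Word).length := by simp [hl, hr]
  have hlr : (l : Word) = (r : Word) := by
    rcases List.prefix_or_prefix_of_prefix hvl.1 hvr.1 with h' | h'
    · exact h'.eq_of_length hlen
    · exact (h'.eq_of_length hlen.symm).symm
  simp [hl, hr] at hlr

theorem length_children {w l r : T.U} {s : Lab2} (h : T.γ w = Sum.inr (s, l, r)) :
    (l : Word).length = (w : Word).length + 1 ∧ (r : Word).length = (w : Word).length + 1 := by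
  obtain ⟨hl, hr⟩ := T.γ_children w _ l r h
  simp [hl, hr]

noncomputable def massDensity (T : LTree Unit Lab2) (w : T.U) : T.U → ℝ :=
  (T.minimalErrorBelow w).indicator fun v => ((1 : ℝ) / 2) ^ ((v : Word).length - (w : Word).length)

theorem massDensity_nonneg (w : T.U) : 0 ≤ T.massDensity w :=
  Set.indicator_nonneg fun _ _ => by positivity

theorem massDensity_of_inl {w : T.U} {s : Unit} (h : T.γ w = Sum.inl s) :
    T.massDensity w = 0 := by
  rw [massDensity, minimalErrorBelow_of_inl h, Set.indicator_empty]
  rfl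

open Classical in
theorem massDensity_of_error {w l r : T.U} (h : T.γ w = Sum.inr (Lab2.error, l, r)) :
    T.massDensity w = Pi.single w 1 := by
  ext v
  rw [massDensity, minimalErrorBelow_of_error h]
  by_cases hv : v = w
  · subst hv; simp
  · simp [hv]

theorem massDensity_of_ok {w l r : T.U} (h : T.γ w = Sum.inr (Lab2.ok, l, r)) :
    T.massDensity w = fun v => T.massDensity l v / 2 + T.massDensity r v / 2 := by
  obtain ⟨hl, hr⟩ := length_children h
  have hchild : ∀ c : T.U, (c : Word).length = (w : Word).length + 1 →
      (T.minimalErrorBelow c).indicator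
        (fun v => ((1 : ℝ) / 2) ^ ((v : Word).length - (w : Word).length)) =
      fun v => T.massDensity c v / 2 := by
    intro c hc
    ext v
    by_cases hv : v ∈ T.minimalErrorBelow c
    · have hcv := hv.1.length_le
      rw [massDensity, Set.indicator_of_mem hv, Set.indicator_of_mem hv,
        show (v : Word).length - (w : Word).length = (v : Word).length - (c : Word).length + 1
          by omega, pow_succ]
      ring
    · simp [massDensity, hv]
  rw [massDensity, minimalErrorBelow_of_ok h,
    Set.indicator_union_of_disjoint (disjoint_minimalErrorBelow_children h),
    hchild l hl, hchild r hr]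

noncomputable def approxMass (T : LTree Unit Lab2) : ℕ → T.U → ℝ
  | 0, _ => 0
  | n + 1, w => massStep (T.approxMass n) (T.γ w)

theorem approxMass_le_one : ∀ (n : ℕ) (w : T.U), T.approxMass n w ≤ 1
  | 0, _ => zero_le_one
  | n + 1, _ => massStep_le_one (approxMass_le_one n) _

theorem sum_massDensity_le_approxMass (n : ℕ) (w : T.U) (F : Finset T.U)
    (hF : ∀ v ∈ F, (v : Word).length < (w : Word).length + n) :
    ∑ v ∈ F, T.massDensity w v ≤ T.approxMass n w := by
  induction n generalizing w with
  | zero =>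
    refine (Finset.sum_eq_zero fun v hv => Set.indicator_of_notMem (fun hvw => ?_) _).le
    have := hvw.1.length_le
    have := hF v hv
    omega
  | succ n ih =>
    rcases hγ : T.γ w with s | ⟨_ | _, l, r⟩
    · simp [massDensity_of_inl hγ, approxMass, hγ, massStep]
    · obtain ⟨hl, hr⟩ := length_children hγ
      have hchild : ∀ c : T.U, (c : Word).length = (w : Word).length + 1 →
          ∑ v ∈ F, T.massDensity c v ≤ T.approxMass n c := fun c hc =>
        ih c fun v hv => by have := hF v hv; omega
      simp only [massDensity_of_ok hγ, approxMass, hγ, massStep, Finset.sum_add_distrib,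
        ← Finset.sum_div]
      linarith [hchild l hl, hchild r hr]
    · classical
      rw [massDensity_of_error hγ, Finset.sum_pi_single']
      simp only [approxMass, hγ, massStep]
      split_ifs <;> norm_num

theorem exists_sum_massDensity_le_approxMass (w : T.U) (F : Finset T.U) :
    ∃ n, ∑ v ∈ F, T.massDensity w v ≤ T.approxMass n w :=
  ⟨F.sup (fun v => (v : Word).length) + 1, sum_massDensity_le_approxMass _ w F fun v hv => by
    have := Finset.le_sup (f := fun v : T.U => (v : Word).length) hv
    omega⟩

theorem summable_massDensity (w : T.U) : Summable (T.massDensity w) :=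
  summable_of_sum_le (massDensity_nonneg w) fun F => by
    obtain ⟨n, hn⟩ := exists_sum_massDensity_le_approxMass w F
    exact hn.trans (approxMass_le_one n w)

noncomputable def errorMass (T : LTree Unit Lab2) (w : T.U) : ℝ :=
  ∑' v, T.massDensity w v

theorem errorMass_le_of_forall_approxMass_le {w : T.U} {x : ℝ}
    (h : ∀ n, T.approxMass n w ≤ x) : T.errorMass w ≤ x :=
  tsum_le_of_sum_le' (h 0) fun F => by
    obtain ⟨n, hn⟩ := exists_sum_massDensity_le_approxMass w F
    exact hn.trans (h n)

theorem errorMass_nonneg (w : T.U) : 0 ≤ T.errorMass w :=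
  tsum_nonneg (massDensity_nonneg w)

theorem errorMass_le_one (w : T.U) : T.errorMass w ≤ 1 :=
  errorMass_le_of_forall_approxMass_le fun n => approxMass_le_one n w

theorem errorMass_eq_massStep (w : T.U) : T.errorMass w = massStep T.errorMass (T.γ w) := by
  classical
  rcases hγ : T.γ w with s | ⟨_ | _, l, r⟩
  · simp [errorMass, massDensity_of_inl hγ, massStep]
  · simp only [errorMass, massDensity_of_ok hγ, massStep]
    rw [Summable.tsum_add ((summable_massDensity l).div_const 2)
      ((summable_massDensity r).div_const 2), tsum_div_const, tsum_div_const]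
  · simp [errorMass, massDensity_of_error hγ, massStep, tsum_pi_single]

theorem tsum_minimalError_eq_errorMass_root :
    ∑' v : minimalError T, ((1 : ℝ) / 2) ^ (((v : T.U) : Word).length) = T.errorMass T.root := by
  rw [tsum_subtype (minimalError T) fun v : T.U => ((1 : ℝ) / 2) ^ (v : Word).length,
    ← minimalErrorBelow_root]
  rfl

theorem approxMass_le_of_eAccWin {a : A2.A} {w : T.U} {ε : I}
    (h : EAccWin halfAdd A2 T (a, w, ε)) (n : ℕ) : T.approxMass n w ≤ ε := by
  induction n generalizing a w ε with
  | zero => exact ε.2.1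
  | succ n ih =>
    obtain ⟨S, hp, hS⟩ := h
    obtain ⟨δ, hδ, d, hd, hnext⟩ := hS _ hp
    have hchildren : ∀ v, T.approxMass n v ≤ d () v :=
      fun v => ih ⟨S, hnext () v _ le_rfl, hS⟩
    exact (massStep_le_dlift hchildren hδ _).trans hd

noncomputable def errorMassI (T : LTree Unit Lab2) (w : T.U) : I :=
  ⟨T.errorMass w, errorMass_nonneg w, errorMass_le_one w⟩

/-- Verifier wins by always choosing `d = errorMass`, a fixed point of `massStep`. -/
theorem eAccWin_of_errorMass_le {a : A2.A} {w : T.U} {ε : I} (h : T.errorMass w ≤ ε) :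
    EAccWin halfAdd A2 T (a, w, ε) := by
  refine ⟨{q | T.errorMass q.2.1 ≤ q.2.2}, h, fun ⟨a, w, ε⟩ hq => ?_⟩
  obtain ⟨δ, hδ, hdlift⟩ := exists_dlift_eq_massStep T.errorMassI (T.γ w)
  refine ⟨δ, hδ, fun _ => T.errorMassI, ?_, fun _ v ε' hv => hv⟩
  change (dlift halfAdd (fun _ => T.errorMassI) δ (T.γ w) : ℝ) ≤ ε
  rw [hdlift]
  exact (errorMass_eq_massStep w).symm.trans_le hq

end LTree

/-- Measuring failed executions: with the lifting `f(x,y) = ½x + ½y`, the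
position `(a₀, root, ε)` is winning for Verifier in the ε-acceptance game iff
`ε ≥ Σ_{v ∈ E'} 2^{-|v|}` where `E'` is the set of minimal error nodes. -/
theorem stmt19 (T : LTree Unit Lab2) (ε : I) :
    EAccWin halfAdd A2 T (A2.a0, T.root, ε) ↔
      (∑' v : minimalError T, ((1 : ℝ) / 2) ^ (((v : T.U) : Word).length)) ≤ (ε : ℝ) := by
  rw [LTree.tsum_minimalError_eq_errorMass_root]
  exact ⟨fun h => LTree.errorMass_le_of_forall_approxMass_le (LTree.approxMass_le_of_eAccWin h),
    LTree.eAccWin_of_errorMass_le⟩
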